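/- For λ > -1, λ ≠ 0, and p, q ≥ 0 with p + q > 0, the cell contribution φ satisfies φ ≤ (p+q)/2, with equality if and only if p = 0 or q = 0. -/

import Mathlib

/-- Cell-wise contribution to the power-divergence-type asymmetry measure. -/
noncomputable def phi (l p q : ℝ) : ℝ :=
  ((p + q) / 2) *
    (1 - (l * (2:ℝ) ^ l / ((2:ℝ) ^ l - 1)) *
      ((1 / l) * (1 - (p / (p + q)) ^ (l + 1) - (q / (p + q)) ^ (l + 1))))

lemma rpow_le_self_of_one_le {x e : ℝ} (hx : 0 ≤ x) (hx1 : x ≤ 1) (he : 1 ≤ e) :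
    x ^ e ≤ x := by
  rcases eq_or_lt_of_le hx with h0 | h0
  · rw [← h0, Real.zero_rpow (by linarith : e ≠ 0)]
  · calc x ^ e ≤ x ^ (1:ℝ) := Real.rpow_le_rpow_of_exponent_ge h0 hx1 he
    _ = x := Real.rpow_one x

lemma rpow_lt_self_of_one_lt {x e : ℝ} (hx : 0 < x) (hx1 : x < 1) (he : 1 < e) :
    x ^ e < x := by
  calc x ^ e < x ^ (1:ℝ) := Real.rpow_lt_rpow_of_exponent_gt hx hx1 he
  _ = x := Real.rpow_one x

lemma self_le_rpow_of_le_one {x e : ℝ} (hx : 0 ≤ x) (hx1 : x ≤ 1) (he0 : 0 < e)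
    (he : e ≤ 1) : x ≤ x ^ e := by
  rcases eq_or_lt_of_le hx with h0 | h0
  · rw [← h0, Real.zero_rpow (ne_of_gt he0)]
  · calc x = x ^ (1:ℝ) := (Real.rpow_one x).symm
    _ ≤ x ^ e := Real.rpow_le_rpow_of_exponent_ge h0 hx1 he

lemma self_lt_rpow_of_lt_one {x e : ℝ} (hx : 0 < x) (hx1 : x < 1) (he0 : 0 < e)
    (he : e < 1) : x < x ^ e := by
  calc x = x ^ (1:ℝ) := (Real.rpow_one x).symm
  _ < x ^ e := Real.rpow_lt_rpow_of_exponent_gt hx hx1 he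

lemma key (l : ℝ) (hl : l > -1) (hl0 : l ≠ 0) (a b : ℝ) (ha : 0 ≤ a) (hb : 0 ≤ b)
    (hab : a + b = 1) :
    0 ≤ ((2:ℝ) ^ l / ((2:ℝ) ^ l - 1)) * (1 - a ^ (l + 1) - b ^ (l + 1)) ∧
      (((2:ℝ) ^ l / ((2:ℝ) ^ l - 1)) * (1 - a ^ (l + 1) - b ^ (l + 1)) = 0 ↔
        a = 0 ∨ b = 0) := by
  have ha1 : a ≤ 1 := by linarith
  have hb1 : b ≤ 1 := by linarith
  have h2 : (0:ℝ) < (2:ℝ) ^ l := Real.rpow_pos_of_pos (by norm_num) l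
  have hzero : a = 0 ∨ b = 0 → 1 - a ^ (l + 1) - b ^ (l + 1) = 0 := by
    rintro (rfl | rfl)
    · have hb' : b = 1 := by linarith
      rw [hb', Real.zero_rpow (by linarith : l + 1 ≠ 0), Real.one_rpow]; ring
    · have ha' : a = 1 := by linarith
      rw [ha', Real.zero_rpow (by linarith : l + 1 ≠ 0), Real.one_rpow]; ring
  rcases lt_or_gt_of_ne hl0 with hneg | hpos
  · -- -1 < l < 0 : 2^l < 1, exponent l+1 ∈ (0,1)
    have h21 : (2:ℝ) ^ l < 1 := Real.rpow_lt_one_of_one_lt_of_neg (by norm_num) hneg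
    have hF : (2:ℝ) ^ l / ((2:ℝ) ^ l - 1) < 0 :=
      div_neg_of_pos_of_neg h2 (by linarith)
    have he0 : 0 < l + 1 := by linarith
    have he1 : l + 1 < 1 := by linarith
    have haE : a ≤ a ^ (l + 1) := self_le_rpow_of_le_one ha ha1 he0 he1.le
    have hbE : b ≤ b ^ (l + 1) := self_le_rpow_of_le_one hb hb1 he0 he1.le
    have hE : 1 - a ^ (l + 1) - b ^ (l + 1) ≤ 0 := by linarith
    constructor
    · nlinarith [mul_nonneg (neg_nonneg.2 hF.le) (neg_nonneg.2 hE)]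
    · constructor
      · intro h
        have hE0 : 1 - a ^ (l + 1) - b ^ (l + 1) = 0 := by
          rcases mul_eq_zero.mp h with h' | h'
          · exact absurd h' hF.ne
          · exact h'
        by_contra hc
        push_neg at hc
        obtain ⟨ha0, hb0⟩ := hc
        have ha' : 0 < a := lt_of_le_of_ne ha (Ne.symm ha0)
        have hb' : 0 < b := lt_of_le_of_ne hb (Ne.symm hb0)
        have ha'' : a < 1 := by linarith
        have hb'' : b < 1 := by linarith
        have : a < a ^ (l + 1) := self_lt_rpow_of_lt_one ha' ha'' he0 he1
        have : b < b ^ (l + 1) := self_lt_rpow_of_lt_one hb' hb'' he0 he1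
        linarith
      · intro h
        rw [hzero h, mul_zero]
  · -- l > 0 : 2^l > 1, exponent l+1 > 1
    have h21 : 1 < (2:ℝ) ^ l :=
      (Real.one_lt_rpow_iff_of_pos (by norm_num)).mpr (Or.inl ⟨by norm_num, hpos⟩)
    have hF : 0 < (2:ℝ) ^ l / ((2:ℝ) ^ l - 1) := div_pos h2 (by linarith)
    have he1 : 1 < l + 1 := by linarith
    have haE : a ^ (l + 1) ≤ a := rpow_le_self_of_one_le ha ha1 he1.le
    have hbE : b ^ (l + 1) ≤ b := rpow_le_self_of_one_le hb hb1 he1.le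
    have hE : 0 ≤ 1 - a ^ (l + 1) - b ^ (l + 1) := by linarith
    constructor
    · exact mul_nonneg hF.le hE
    · constructor
      · intro h
        have hE0 : 1 - a ^ (l + 1) - b ^ (l + 1) = 0 := by
          rcases mul_eq_zero.mp h with h' | h'
          · exact absurd h' hF.ne'
          · exact h'
        by_contra hc
        push_neg at hc
        obtain ⟨ha0, hb0⟩ := hc
        have ha' : 0 < a := lt_of_le_of_ne ha (Ne.symm ha0)
        have hb' : 0 < b := lt_of_le_of_ne hb (Ne.symm hb0)
        have ha'' : a < 1 := by linarith
        have hb'' : b < 1 := by linarith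
        have : a ^ (l + 1) < a := rpow_lt_self_of_one_lt ha' ha'' he1
        have : b ^ (l + 1) < b := rpow_lt_self_of_one_lt hb' hb'' he1
        linarith
      · intro h
        rw [hzero h, mul_zero]

theorem phi_le_and_eq_iff (l p q : ℝ) (hl : l > -1) (hl0 : l ≠ 0)
    (hp : 0 ≤ p) (hq : 0 ≤ q) (hpq : 0 < p + q) :
    phi l p q ≤ (p + q) / 2 ∧ (phi l p q = (p + q) / 2 ↔ p = 0 ∨ q = 0) := by
  have hs0 : p + q ≠ 0 := ne_of_gt hpq
  set a := p / (p + q) with ha_def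
  set b := q / (p + q) with hb_def
  have ha : 0 ≤ a := div_nonneg hp hpq.le
  have hb : 0 ≤ b := div_nonneg hq hpq.le
  have hab : a + b = 1 := by rw [ha_def, hb_def, ← add_div, div_self hs0]
  obtain ⟨hD, hDiff⟩ := key l hl hl0 a b ha hb hab
  set D := ((2:ℝ) ^ l / ((2:ℝ) ^ l - 1)) * (1 - a ^ (l + 1) - b ^ (l + 1)) with hD_def
  have hphi : phi l p q = (p + q) / 2 * (1 - D) := by
    unfold phi
    rw [hD_def]
    have : l * (2:ℝ) ^ l / ((2:ℝ) ^ l - 1) *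
        ((1 / l) * (1 - a ^ (l + 1) - b ^ (l + 1))) =
        (2:ℝ) ^ l / ((2:ℝ) ^ l - 1) * (1 - a ^ (l + 1) - b ^ (l + 1)) := by
      have h2ne : (2:ℝ) ^ l - 1 ≠ 0 := by
        rcases lt_or_gt_of_ne hl0 with h | h
        · have := Real.rpow_lt_one_of_one_lt_of_neg (by norm_num : (1:ℝ) < 2) h
          intro hc; linarith
        · have := (Real.one_lt_rpow_iff_of_pos (by norm_num : (0:ℝ) < 2)).mpr
            (Or.inl ⟨by norm_num, h⟩)
          intro hc; linarith
      field_simp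
    rw [← ha_def, ← hb_def, this]
  constructor
  · rw [hphi]
    nlinarith [mul_nonneg (by linarith : (0:ℝ) ≤ (p + q) / 2) hD]
  · rw [hphi]
    have ha0 : a = 0 ↔ p = 0 := by
      rw [ha_def, div_eq_zero_iff]
      exact or_iff_left hs0
    have hb0 : b = 0 ↔ q = 0 := by
      rw [hb_def, div_eq_zero_iff]
      exact or_iff_left hs0
    rw [← ha0, ← hb0, ← hDiff]
    constructor
    · intro h
      have : (p + q) / 2 * D = 0 := by linarith [h]
      rcases mul_eq_zero.mp this with h' | h'
      · linarith
      · exact h'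
    · intro h
      rw [h]
      ring
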